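/- Let z₁, z₂, … be i.i.d. mean-zero random vectors in ℝⁿ with finite fourth moment, b_τ = (1/τ)∑_{t=1}^τ zₜ, and A(τ₁,τ₂) symmetric stochastic n×n matrices. Then E[∑_{τ₁,τ₂,τ₃,τ₄=1}^{t} b_{τ₁}ᵀA(τ₁,τ₂)b_{τ₂}·b_{τ₃}ᵀA(τ₃,τ₄)b_{τ₄}] ≤ 4·E[‖z‖⁴]·t²·(1 + ln t)². -/

import Mathlib

open MeasureTheory ProbabilityTheory Finset
open scoped RealInnerProductSpace

/-- `bavg2 z τ ω` is the partial average `(1/τ) ∑_{t=1}^τ z_t(ω)`. -/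
noncomputable def bavg2 {Ω : Type*} {n : ℕ} (z : ℕ → Ω → EuclideanSpace ℝ (Fin n))
    (τ : ℕ) (ω : Ω) : EuclideanSpace ℝ (Fin n) :=
  (τ : ℝ)⁻¹ • ∑ s ∈ Finset.Icc 1 τ, z s ω



lemma stoch_norm {n : ℕ} (A : Matrix (Fin n) (Fin n) ℝ) (hs : A.IsSymm)
    (hnn : ∀ i j, 0 ≤ A i j) (hrow : ∀ i, ∑ j, A i j = 1)
    (v : EuclideanSpace ℝ (Fin n)) : ‖Matrix.toEuclideanLin A v‖ ≤ ‖v‖ := by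
  have hcol : ∀ j, ∑ i, A i j = 1 := by
    intro j
    have := hrow j
    rw [← this]
    exact Finset.sum_congr rfl fun i _ => by rw [← Matrix.IsSymm.apply hs i j]
  rw [EuclideanSpace.norm_eq, EuclideanSpace.norm_eq]
  apply Real.sqrt_le_sqrt
  have key : ∀ i, ‖Matrix.toEuclideanLin A v i‖ ^ 2 ≤ ∑ j, A i j * ‖v j‖ ^ 2 := by
    intro i
    have happ : Matrix.toEuclideanLin A v i = ∑ j, A i j * v j := by
      rw [Matrix.toEuclideanLin_apply]; rfl
    rw [happ, Real.norm_eq_abs, sq_abs]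
    calc (∑ j, A i j * v j) ^ 2 = (∑ j, Real.sqrt (A i j) * (Real.sqrt (A i j) * v j)) ^ 2 := by
          congr 1; refine Finset.sum_congr rfl fun j _ => ?_
          rw [← mul_assoc, Real.mul_self_sqrt (hnn i j)]
      _ ≤ (∑ j, Real.sqrt (A i j) ^ 2) * ∑ j, (Real.sqrt (A i j) * v j) ^ 2 :=
          Finset.sum_mul_sq_le_sq_mul_sq _ _ _
      _ = ∑ j, A i j * ‖v j‖ ^ 2 := by
          have : (∑ j, Real.sqrt (A i j) ^ 2) = 1 := by
            rw [← hrow i]; exact Finset.sum_congr rfl fun j _ => Real.sq_sqrt (hnn i j)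
          rw [this, one_mul]
          refine Finset.sum_congr rfl fun j _ => ?_
          rw [mul_pow, Real.sq_sqrt (hnn i j), Real.norm_eq_abs, sq_abs]
  calc ∑ i, ‖Matrix.toEuclideanLin A v i‖ ^ 2 ≤ ∑ i, ∑ j, A i j * ‖v j‖ ^ 2 :=
        Finset.sum_le_sum fun i _ => key i
    _ = ∑ j, (∑ i, A i j) * ‖v j‖ ^ 2 := by rw [Finset.sum_comm]; simp [Finset.sum_mul]
    _ = ∑ i, ‖v i‖ ^ 2 := by simp [hcol]

lemma inner_bd {n : ℕ} (A : Matrix (Fin n) (Fin n) ℝ) (hs : A.IsSymm)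
    (hnn : ∀ i j, 0 ≤ A i j) (hrow : ∀ i, ∑ j, A i j = 1)
    (u v : EuclideanSpace ℝ (Fin n)) : |⟪u, Matrix.toEuclideanLin A v⟫| ≤ ‖u‖ * ‖v‖ :=
  (abs_real_inner_le_norm u _).trans
    (mul_le_mul_of_nonneg_left (stoch_norm A hs hnn hrow v) (norm_nonneg u))

lemma ptwise {n : ℕ} (t : ℕ) (B : ℕ → EuclideanSpace ℝ (Fin n))
    (A : ℕ → ℕ → Matrix (Fin n) (Fin n) ℝ) (hAsymm : ∀ t₁ t₂, (A t₁ t₂).IsSymm)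
    (hAnonneg : ∀ t₁ t₂ i j, 0 ≤ A t₁ t₂ i j) (hArow : ∀ t₁ t₂ i, ∑ j, A t₁ t₂ i j = 1) :
    |∑ τ₁ ∈ Finset.Icc 1 t, ∑ τ₂ ∈ Finset.Icc 1 t, ∑ τ₃ ∈ Finset.Icc 1 t,
        ∑ τ₄ ∈ Finset.Icc 1 t,
        ⟪B τ₁, Matrix.toEuclideanLin (A τ₁ τ₂) (B τ₂)⟫ *
          ⟪B τ₃, Matrix.toEuclideanLin (A τ₃ τ₄) (B τ₄)⟫| ≤
      (t : ℝ) ^ 2 * (∑ τ ∈ Finset.Icc 1 t, ‖B τ‖ ^ 2) ^ 2 := by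
  have h1 : ∀ τ₁ τ₂ τ₃ τ₄, |⟪B τ₁, Matrix.toEuclideanLin (A τ₁ τ₂) (B τ₂)⟫ *
      ⟪B τ₃, Matrix.toEuclideanLin (A τ₃ τ₄) (B τ₄)⟫| ≤ (‖B τ₁‖ * ‖B τ₂‖) * (‖B τ₃‖ * ‖B τ₄‖) := by
    intro τ₁ τ₂ τ₃ τ₄
    rw [abs_mul]
    exact mul_le_mul (inner_bd _ (hAsymm _ _) (hAnonneg _ _) (hArow _ _) _ _)
      (inner_bd _ (hAsymm _ _) (hAnonneg _ _) (hArow _ _) _ _) (abs_nonneg _)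
      (mul_nonneg (norm_nonneg _) (norm_nonneg _))
  calc |∑ τ₁ ∈ Finset.Icc 1 t, ∑ τ₂ ∈ Finset.Icc 1 t, ∑ τ₃ ∈ Finset.Icc 1 t,
        ∑ τ₄ ∈ Finset.Icc 1 t,
        ⟪B τ₁, Matrix.toEuclideanLin (A τ₁ τ₂) (B τ₂)⟫ *
          ⟪B τ₃, Matrix.toEuclideanLin (A τ₃ τ₄) (B τ₄)⟫|
      ≤ ∑ τ₁ ∈ Finset.Icc 1 t, ∑ τ₂ ∈ Finset.Icc 1 t, ∑ τ₃ ∈ Finset.Icc 1 t,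
        ∑ τ₄ ∈ Finset.Icc 1 t, (‖B τ₁‖ * ‖B τ₂‖) * (‖B τ₃‖ * ‖B τ₄‖) := by
        refine (Finset.abs_sum_le_sum_abs _ _).trans (Finset.sum_le_sum fun τ₁ _ => ?_)
        refine (Finset.abs_sum_le_sum_abs _ _).trans (Finset.sum_le_sum fun τ₂ _ => ?_)
        refine (Finset.abs_sum_le_sum_abs _ _).trans (Finset.sum_le_sum fun τ₃ _ => ?_)
        exact (Finset.abs_sum_le_sum_abs _ _).trans (Finset.sum_le_sum fun τ₄ _ => h1 _ _ _ _)
    _ = (∑ τ ∈ Finset.Icc 1 t, ‖B τ‖) ^ 4 := by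
        simp only [← Finset.sum_mul, ← Finset.mul_sum]
        ring
    _ ≤ (t : ℝ) ^ 2 * (∑ τ ∈ Finset.Icc 1 t, ‖B τ‖ ^ 2) ^ 2 := by
        have h2 : (∑ τ ∈ Finset.Icc 1 t, ‖B τ‖) ^ 2 ≤
            (t : ℝ) * ∑ τ ∈ Finset.Icc 1 t, ‖B τ‖ ^ 2 := by
          have := Finset.sum_mul_sq_le_sq_mul_sq (Finset.Icc 1 t) (fun _ => (1:ℝ))
            (fun τ => ‖B τ‖)
          simpa [Nat.card_Icc] using this
        have h3 : (0:ℝ) ≤ (∑ τ ∈ Finset.Icc 1 t, ‖B τ‖) ^ 2 := sq_nonneg _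
        calc (∑ τ ∈ Finset.Icc 1 t, ‖B τ‖) ^ 4
            = ((∑ τ ∈ Finset.Icc 1 t, ‖B τ‖) ^ 2) ^ 2 := by ring
          _ ≤ ((t : ℝ) * ∑ τ ∈ Finset.Icc 1 t, ‖B τ‖ ^ 2) ^ 2 := by
              apply pow_le_pow_left₀ h3 h2
          _ = (t : ℝ) ^ 2 * (∑ τ ∈ Finset.Icc 1 t, ‖B τ‖ ^ 2) ^ 2 := by ring

lemma amgm4 (a b c d : ℝ) (ha : 0 ≤ a) (hb : 0 ≤ b) (hc : 0 ≤ c) (hd : 0 ≤ d) :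
    a * b * c * d ≤ (a ^ 4 + b ^ 4 + c ^ 4 + d ^ 4) / 4 := by
  nlinarith [sq_nonneg (a*b - c*d), sq_nonneg (a^2 - b^2), sq_nonneg (c^2 - d^2),
    sq_nonneg (a*b + c*d), mul_nonneg ha hb, mul_nonneg hc hd]

lemma coord_le {n : ℕ} (x : EuclideanSpace ℝ (Fin n)) (i : Fin n) : |x i| ≤ ‖x‖ := by
  rw [EuclideanSpace.norm_eq]
  have h1 : |x i| = Real.sqrt (‖x i‖ ^ 2) := by
    rw [Real.sqrt_sq_eq_abs, Real.norm_eq_abs, abs_abs]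
  rw [h1]
  exact Real.sqrt_le_sqrt (Finset.single_le_sum (f := fun j => ‖x j‖^2)
    (fun j _ => by positivity) (Finset.mem_univ i))

lemma amgm2w (a b l : ℝ) (hl : 0 < l) : a * b ≤ (l * a^2 + b^2/l)/2 := by
  have h := sq_nonneg (l*a - b)
  have h2 := div_nonneg h (by positivity : (0:ℝ) ≤ 2*l)
  have he : (l*a - b)^2 / (2*l) = (l*a^2 + b^2/l)/2 - a*b := by
    field_simp; ring
  linarith [he ▸ h2]

lemma harm_sum (t : ℕ) : (∑ τ ∈ Finset.Icc 1 t, (τ:ℝ)⁻¹) ≤ 1 + Real.log t := by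
  have h1 : (∑ τ ∈ Finset.Icc 1 t, (τ:ℝ)⁻¹) = (harmonic t : ℝ) := by
    rw [harmonic]
    push_cast
    rw [Finset.range_eq_Ico, ← Finset.Ico_add_one_right_eq_Icc]
    rw [Finset.sum_Ico_eq_sum_range]
    simp [add_comm]
  rw [h1]
  exact harmonic_le_one_add_log t

lemma comb (a b c d : ℕ) (h : ¬((a=b∧c=d)∨(a=c∧b=d)∨(a=d∧b=c))) :
    (a≠b∧a≠c∧a≠d) ∨ (b≠a∧b≠c∧b≠d) ∨ (c≠a∧c≠b∧c≠d) ∨ (d≠a∧d≠b∧d≠c) := by omega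

lemma ite_sum_le (M : ℝ) (hM : 0 ≤ M) (Q₁ Q₂ Q₃ : Prop) [Decidable Q₁] [Decidable Q₂]
    [Decidable Q₃] : (if Q₁ ∨ Q₂ ∨ Q₃ then M else 0) ≤
      (if Q₁ then M else 0) + (if Q₂ then M else 0) + (if Q₃ then M else 0) := by
  by_cases h1 : Q₁ <;> by_cases h2 : Q₂ <;> by_cases h3 : Q₃ <;> simp [h1, h2, h3] <;> linarith

section AuxProb
variable {Ω : Type*} [MeasurableSpace Ω] (P : Measure Ω) [IsProbabilityMeasure P]
  {n : ℕ} (z : ℕ → Ω → EuclideanSpace ℝ (Fin n))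

lemma hz4 (hmeas : ∀ i, Measurable (z i)) (hident : ∀ i j, IdentDistrib (z i) (z j) P P)
    (hint : Integrable (fun ω => ‖z 1 ω‖ ^ 4) P) (s : ℕ) :
    Integrable (fun ω => ‖z s ω‖ ^ 4) P := by
  have h := (hident s 1).comp (u := fun x => ‖x‖^4) (by measurability)
  exact h.integrable_iff.2 hint

lemma hz4int (hmeas : ∀ i, Measurable (z i)) (hident : ∀ i j, IdentDistrib (z i) (z j) P P)
    (hint : Integrable (fun ω => ‖z 1 ω‖ ^ 4) P) (s : ℕ) :
    (∫ ω, ‖z s ω‖ ^ 4 ∂P) = ∫ ω, ‖z 1 ω‖ ^ 4 ∂P := by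
  exact ((hident s 1).comp (u := fun x => ‖x‖^4) (by measurability)).integral_eq

lemma hzint (hmeas : ∀ i, Measurable (z i)) (hident : ∀ i j, IdentDistrib (z i) (z j) P P)
    (hint : Integrable (fun ω => ‖z 1 ω‖ ^ 4) P) (s : ℕ) :
    Integrable (z s) P := by
  have h4 := hz4 P z hmeas hident hint s
  refine ⟨(hmeas s).aestronglyMeasurable, ?_⟩
  have : HasFiniteIntegral (fun ω => 1 + ‖z s ω‖ ^ 4) P :=
    ((integrable_const (1:ℝ)).add h4).hasFiniteIntegral
  refine (hasFiniteIntegral_iff_norm _).2 (lt_of_le_of_lt ?_ ((hasFiniteIntegral_iff_norm _).1 this))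
  apply lintegral_mono fun ω => ?_
  apply ENNReal.ofReal_le_ofReal
  have h := norm_nonneg (z s ω)
  rw [Real.norm_eq_abs]
  rcases le_or_gt ‖z s ω‖ 1 with h1 | h1
  · rw [abs_of_nonneg (by positivity)]; nlinarith [pow_nonneg h 4]
  · rw [abs_of_nonneg (by positivity)]; nlinarith [pow_le_pow_right₀ h1.le (by norm_num : 1 ≤ 4)]

lemma vanish (hmeas : ∀ i, Measurable (z i))
    (hindep : iIndepFun z P)
    (hident : ∀ i j, IdentDistrib (z i) (z j) P P)
    (hmean : ∀ i, ∫ ω, z i ω ∂P = 0)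
    (hint : Integrable (fun ω => ‖z 1 ω‖ ^ 4) P)
    (a b c d : ℕ) (hab : a ≠ b) (hac : a ≠ c) (had : a ≠ d) :
    (∫ ω, ⟪z a ω, z b ω⟫ * ⟪z c ω, z d ω⟫ ∂P) = 0 := by
  classical
  have hdisj : Disjoint ({a} : Finset ℕ) ({b, c, d} : Finset ℕ) := by
    simp [Finset.disjoint_left, hab, hac, had]
  have indep := hindep.indepFun_finset {a} {b, c, d} hdisj hmeas
  have hbm : b ∈ ({b, c, d} : Finset ℕ) := by simp
  have hcm : c ∈ ({b, c, d} : Finset ℕ) := by simp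
  have hdm : d ∈ ({b, c, d} : Finset ℕ) := by simp
  have ham : a ∈ ({a} : Finset ℕ) := Finset.mem_singleton_self a
  -- coordinate-wise independence
  have key : ∀ i : Fin n,
      (∫ ω, (z a ω i) * ((z b ω i) * ⟪z c ω, z d ω⟫) ∂P) = 0 := by
    intro i
    set X : Ω → ℝ := fun ω => z a ω i with hX
    set Y : Ω → ℝ := fun ω => (z b ω i) * ⟪z c ω, z d ω⟫ with hY
    have hXY : IndepFun X Y P := by
      have hφ : Measurable (fun v : (({a} : Finset ℕ) → EuclideanSpace ℝ (Fin n)) => v ⟨a, ham⟩ i) := by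
        exact ((measurable_pi_apply _).comp ((WithLp.measurable_ofLp 2 _).comp (measurable_pi_apply _)))
      have hψ : Measurable (fun v : (({b, c, d} : Finset ℕ) → EuclideanSpace ℝ (Fin n)) =>
          (v ⟨b, hbm⟩ i) * ⟪v ⟨c, hcm⟩, v ⟨d, hdm⟩⟫) := by
        apply Measurable.mul
        · exact ((measurable_pi_apply _).comp ((WithLp.measurable_ofLp 2 _).comp (measurable_pi_apply _)))
        · exact Measurable.inner (measurable_pi_apply _) (measurable_pi_apply _)
      exact indep.comp hφ hψ
    have hXint : Integrable X P := by
      refine (hzint P z hmeas hident hint a).norm.mono' ?_ ?_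
      · exact (((measurable_pi_apply i).comp ((WithLp.measurable_ofLp 2 _).comp (hmeas a)))).aestronglyMeasurable
      · filter_upwards with ω
        rw [Real.norm_eq_abs]
        simpa using coord_le (z a ω) i
    have hYint : Integrable Y P := by
      have hb4 := hz4 P z hmeas hident hint b
      have hc4 := hz4 P z hmeas hident hint c
      have hd4 := hz4 P z hmeas hident hint d
      have hg : Integrable (fun ω => (1 + ‖z b ω‖^4 + ‖z c ω‖^4 + ‖z d ω‖^4)/4) P := by
        exact (((integrable_const (1:ℝ)).add hb4).add hc4 |>.add hd4).div_const 4
      refine hg.mono' ?_ ?_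
      · exact (((measurable_pi_apply i).comp ((WithLp.measurable_ofLp 2 _).comp (hmeas b))).mul
          ((hmeas c).inner (hmeas d))).aestronglyMeasurable
      · filter_upwards with ω
        rw [Real.norm_eq_abs, abs_mul]
        have h1 : |z b ω i| ≤ ‖z b ω‖ := coord_le _ i
        have h2 : |⟪z c ω, z d ω⟫| ≤ ‖z c ω‖ * ‖z d ω‖ := abs_real_inner_le_norm _ _
        calc |z b ω i| * |⟪z c ω, z d ω⟫| ≤ ‖z b ω‖ * (‖z c ω‖ * ‖z d ω‖) := by
              exact mul_le_mul h1 h2 (abs_nonneg _) (norm_nonneg _)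
          _ = 1 * ‖z b ω‖ * ‖z c ω‖ * ‖z d ω‖ := by ring
          _ ≤ (1^4 + ‖z b ω‖^4 + ‖z c ω‖^4 + ‖z d ω‖^4)/4 :=
              amgm4 _ _ _ _ zero_le_one (norm_nonneg _) (norm_nonneg _) (norm_nonneg _)
          _ = (1 + ‖z b ω‖^4 + ‖z c ω‖^4 + ‖z d ω‖^4)/4 := by norm_num
    have hXzero : (∫ ω, X ω ∂P) = 0 := by
      have := (EuclideanSpace.proj (𝕜 := ℝ) i).integral_comp_comm
        (hzint P z hmeas hident hint a)
      simpa [hmean a] using this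
    have := hXY.integral_mul_eq_mul_integral hXint.aestronglyMeasurable hYint.aestronglyMeasurable
    calc (∫ ω, X ω * Y ω ∂P) = ∫ ω, (X * Y) ω ∂P := by rfl
      _ = (∫ ω, X ω ∂P) * ∫ ω, Y ω ∂P := this
      _ = 0 := by rw [hXzero, zero_mul]
  have expand : ∀ (u v : EuclideanSpace ℝ (Fin n)) (W : ℝ),
      ⟪u, v⟫ * W = ∑ i : Fin n, u i * (v i * W) := by
    intro u v W
    rw [PiLp.inner_apply, Finset.sum_mul]
    exact Finset.sum_congr rfl fun i _ => by
      simp only [RCLike.inner_apply, starRingEnd_apply, star_trivial]; ring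
  have hterm_int : ∀ i : Fin n,
      Integrable (fun ω => (z a ω i) * ((z b ω i) * ⟪z c ω, z d ω⟫)) P := by
    intro i
    have ha4 := hz4 P z hmeas hident hint a
    have hb4 := hz4 P z hmeas hident hint b
    have hc4 := hz4 P z hmeas hident hint c
    have hd4 := hz4 P z hmeas hident hint d
    have hg : Integrable (fun ω => (‖z a ω‖^4 + ‖z b ω‖^4 + ‖z c ω‖^4 + ‖z d ω‖^4)/4) P :=
      (((ha4.add hb4).add hc4).add hd4).div_const 4
    refine hg.mono' ?_ ?_
    · exact (((measurable_pi_apply i).comp ((WithLp.measurable_ofLp 2 _).comp (hmeas a))).mul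
        (((measurable_pi_apply i).comp ((WithLp.measurable_ofLp 2 _).comp (hmeas b))).mul
          ((hmeas c).inner (hmeas d)))).aestronglyMeasurable
    · filter_upwards with ω
      rw [Real.norm_eq_abs, abs_mul, abs_mul]
      calc |z a ω i| * (|z b ω i| * |⟪z c ω, z d ω⟫|)
          ≤ ‖z a ω‖ * (‖z b ω‖ * (‖z c ω‖ * ‖z d ω‖)) := by
            refine mul_le_mul (coord_le _ i) ?_ (by positivity) (norm_nonneg _)
            exact mul_le_mul (coord_le _ i) (abs_real_inner_le_norm _ _)
              (abs_nonneg _) (norm_nonneg _)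
        _ = ‖z a ω‖ * ‖z b ω‖ * ‖z c ω‖ * ‖z d ω‖ := by ring
        _ ≤ (‖z a ω‖^4 + ‖z b ω‖^4 + ‖z c ω‖^4 + ‖z d ω‖^4)/4 :=
            amgm4 _ _ _ _ (norm_nonneg _) (norm_nonneg _) (norm_nonneg _) (norm_nonneg _)
  calc (∫ ω, ⟪z a ω, z b ω⟫ * ⟪z c ω, z d ω⟫ ∂P)
      = ∫ ω, ∑ i : Fin n, (z a ω i) * ((z b ω i) * ⟪z c ω, z d ω⟫) ∂P := by
        congr 1; funext ω; exact expand _ _ _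
    _ = ∑ i : Fin n, ∫ ω, (z a ω i) * ((z b ω i) * ⟪z c ω, z d ω⟫) ∂P :=
        integral_finset_sum _ fun i _ => hterm_int i
    _ = 0 := Finset.sum_eq_zero fun i _ => key i

lemma hinner_int (hmeas : ∀ i, Measurable (z i))
    (hident : ∀ i j, IdentDistrib (z i) (z j) P P)
    (hint : Integrable (fun ω => ‖z 1 ω‖ ^ 4) P) (a b c d : ℕ) :
    Integrable (fun ω => ⟪z a ω, z b ω⟫ * ⟪z c ω, z d ω⟫) P := by
  have hg : Integrable (fun ω => (‖z a ω‖^4 + ‖z b ω‖^4 + ‖z c ω‖^4 + ‖z d ω‖^4)/4) P :=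
    ((((hz4 P z hmeas hident hint a).add (hz4 P z hmeas hident hint b)).add
      (hz4 P z hmeas hident hint c)).add (hz4 P z hmeas hident hint d)).div_const 4
  refine hg.mono' ?_ ?_
  · exact (((hmeas a).inner (hmeas b)).mul ((hmeas c).inner (hmeas d))).aestronglyMeasurable
  · filter_upwards with ω
    rw [Real.norm_eq_abs, abs_mul]
    calc |⟪z a ω, z b ω⟫| * |⟪z c ω, z d ω⟫|
        ≤ (‖z a ω‖ * ‖z b ω‖) * (‖z c ω‖ * ‖z d ω‖) :=
          mul_le_mul (abs_real_inner_le_norm _ _) (abs_real_inner_le_norm _ _)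
            (abs_nonneg _) (by positivity)
      _ = ‖z a ω‖ * ‖z b ω‖ * ‖z c ω‖ * ‖z d ω‖ := by ring
      _ ≤ (‖z a ω‖^4 + ‖z b ω‖^4 + ‖z c ω‖^4 + ‖z d ω‖^4)/4 :=
          amgm4 _ _ _ _ (norm_nonneg _) (norm_nonneg _) (norm_nonneg _) (norm_nonneg _)

lemma term_le_M (hmeas : ∀ i, Measurable (z i))
    (hident : ∀ i j, IdentDistrib (z i) (z j) P P)
    (hint : Integrable (fun ω => ‖z 1 ω‖ ^ 4) P) (a b c d : ℕ) :
    (∫ ω, ⟪z a ω, z b ω⟫ * ⟪z c ω, z d ω⟫ ∂P) ≤ ∫ ω, ‖z 1 ω‖ ^ 4 ∂P := by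
  have hg : Integrable (fun ω => (‖z a ω‖^4 + ‖z b ω‖^4 + ‖z c ω‖^4 + ‖z d ω‖^4)/4) P :=
    ((((hz4 P z hmeas hident hint a).add (hz4 P z hmeas hident hint b)).add
      (hz4 P z hmeas hident hint c)).add (hz4 P z hmeas hident hint d)).div_const 4
  have h1 : (∫ ω, ⟪z a ω, z b ω⟫ * ⟪z c ω, z d ω⟫ ∂P) ≤
      ∫ ω, (‖z a ω‖^4 + ‖z b ω‖^4 + ‖z c ω‖^4 + ‖z d ω‖^4)/4 ∂P := by
    refine integral_mono (hinner_int P z hmeas hident hint a b c d) hg fun ω => ?_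
    calc ⟪z a ω, z b ω⟫ * ⟪z c ω, z d ω⟫ ≤ |⟪z a ω, z b ω⟫ * ⟪z c ω, z d ω⟫| := le_abs_self _
      _ ≤ (‖z a ω‖ * ‖z b ω‖) * (‖z c ω‖ * ‖z d ω‖) := by
          rw [abs_mul]
          exact mul_le_mul (abs_real_inner_le_norm _ _) (abs_real_inner_le_norm _ _)
            (abs_nonneg _) (by positivity)
      _ = ‖z a ω‖ * ‖z b ω‖ * ‖z c ω‖ * ‖z d ω‖ := by ring
      _ ≤ (‖z a ω‖^4 + ‖z b ω‖^4 + ‖z c ω‖^4 + ‖z d ω‖^4)/4 :=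
          amgm4 _ _ _ _ (norm_nonneg _) (norm_nonneg _) (norm_nonneg _) (norm_nonneg _)
  refine h1.trans (le_of_eq ?_)
  have ha4 : Integrable (fun ω => ‖z a ω‖^4) P := hz4 P z hmeas hident hint a
  have hb4 : Integrable (fun ω => ‖z b ω‖^4) P := hz4 P z hmeas hident hint b
  have hc4 : Integrable (fun ω => ‖z c ω‖^4) P := hz4 P z hmeas hident hint c
  have hd4 : Integrable (fun ω => ‖z d ω‖^4) P := hz4 P z hmeas hident hint d
  have hab : Integrable (fun ω => ‖z a ω‖^4 + ‖z b ω‖^4) P := ha4.add hb4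
  have habc : Integrable (fun ω => ‖z a ω‖^4 + ‖z b ω‖^4 + ‖z c ω‖^4) P := hab.add hc4
  rw [integral_div, integral_add habc hd4, integral_add hab hc4, integral_add ha4 hb4,
    hz4int P z hmeas hident hint a, hz4int P z hmeas hident hint b,
    hz4int P z hmeas hident hint c, hz4int P z hmeas hident hint d]
  ring

lemma moment4 (hmeas : ∀ i, Measurable (z i))
    (hindep : iIndepFun z P)
    (hident : ∀ i j, IdentDistrib (z i) (z j) P P)
    (hmean : ∀ i, ∫ ω, z i ω ∂P = 0)
    (hint : Integrable (fun ω => ‖z 1 ω‖ ^ 4) P) (τ : ℕ) :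
    (∫ ω, ‖∑ s ∈ Finset.Icc 1 τ, z s ω‖ ^ 4 ∂P) ≤
      3 * (τ:ℝ)^2 * ∫ ω, ‖z 1 ω‖ ^ 4 ∂P := by
  classical
  set M := ∫ ω, ‖z 1 ω‖ ^ 4 ∂P with hM
  have hM0 : 0 ≤ M := integral_nonneg fun ω => by positivity
  set I := Finset.Icc 1 τ with hI
  have hexp : ∀ ω, ‖∑ s ∈ I, z s ω‖ ^ 4 =
      ∑ a ∈ I, ∑ b ∈ I, ∑ c ∈ I, ∑ d ∈ I, ⟪z a ω, z b ω⟫ * ⟪z c ω, z d ω⟫ := by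
    intro ω
    have h1 : ‖∑ s ∈ I, z s ω‖ ^ 2 = ∑ a ∈ I, ∑ b ∈ I, ⟪z a ω, z b ω⟫ := by
      rw [← real_inner_self_eq_norm_sq, sum_inner]
      exact Finset.sum_congr rfl fun a _ => inner_sum _ _ _
    have h2 : ‖∑ s ∈ I, z s ω‖ ^ 4 = (‖∑ s ∈ I, z s ω‖ ^ 2) * (‖∑ s ∈ I, z s ω‖ ^ 2) := by
      ring
    rw [h2, h1, Finset.sum_mul_sum]
    refine Finset.sum_congr rfl fun a _ => ?_
    calc ∑ c ∈ I, (∑ b ∈ I, ⟪z a ω, z b ω⟫) * (∑ d ∈ I, ⟪z c ω, z d ω⟫)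
        = ∑ c ∈ I, ∑ b ∈ I, ∑ d ∈ I, ⟪z a ω, z b ω⟫ * ⟪z c ω, z d ω⟫ := by
          exact Finset.sum_congr rfl fun c _ => by rw [Finset.sum_mul_sum]
      _ = ∑ b ∈ I, ∑ c ∈ I, ∑ d ∈ I, ⟪z a ω, z b ω⟫ * ⟪z c ω, z d ω⟫ := Finset.sum_comm
  have hint4 : ∀ a b c d : ℕ,
      Integrable (fun ω => ⟪z a ω, z b ω⟫ * ⟪z c ω, z d ω⟫) P :=
    fun a b c d => hinner_int P z hmeas hident hint a b c d
  have step1 : (∫ ω, ‖∑ s ∈ I, z s ω‖ ^ 4 ∂P) =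
      ∑ a ∈ I, ∑ b ∈ I, ∑ c ∈ I, ∑ d ∈ I, ∫ ω, ⟪z a ω, z b ω⟫ * ⟪z c ω, z d ω⟫ ∂P := by
    rw [integral_congr_ae (Filter.Eventually.of_forall hexp)]
    rw [integral_finset_sum _ fun a _ => integrable_finset_sum _ fun b _ =>
      integrable_finset_sum _ fun c _ => integrable_finset_sum _ fun d _ => hint4 a b c d]
    refine Finset.sum_congr rfl fun a _ => ?_
    rw [integral_finset_sum _ fun b _ =>
      integrable_finset_sum _ fun c _ => integrable_finset_sum _ fun d _ => hint4 a b c d]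
    refine Finset.sum_congr rfl fun b _ => ?_
    rw [integral_finset_sum _ fun c _ => integrable_finset_sum _ fun d _ => hint4 a b c d]
    refine Finset.sum_congr rfl fun c _ => ?_
    rw [integral_finset_sum _ fun d _ => hint4 a b c d]
  have hterm : ∀ a b c d : ℕ, (∫ ω, ⟪z a ω, z b ω⟫ * ⟪z c ω, z d ω⟫ ∂P) ≤
      if (a=b∧c=d)∨(a=c∧b=d)∨(a=d∧b=c) then M else 0 := by
    intro a b c d
    by_cases hP : (a=b∧c=d)∨(a=c∧b=d)∨(a=d∧b=c)
    · rw [if_pos hP]; exact term_le_M P z hmeas hident hint a b c d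
    · rw [if_neg hP]
      rcases comb a b c d hP with ⟨h1,h2,h3⟩|⟨h1,h2,h3⟩|⟨h1,h2,h3⟩|⟨h1,h2,h3⟩
      · exact le_of_eq (vanish P z hmeas hindep hident hmean hint a b c d h1 h2 h3)
      · refine le_of_eq (Eq.trans ?_ (vanish P z hmeas hindep hident hmean hint b a c d h1 h2 h3))
        congr 1; funext ω; rw [real_inner_comm]
      · refine le_of_eq (Eq.trans ?_ (vanish P z hmeas hindep hident hmean hint c d a b h3 h1 h2))
        congr 1; funext ω; rw [mul_comm]
      · refine le_of_eq (Eq.trans ?_ (vanish P z hmeas hindep hident hmean hint d c a b h3 h1 h2))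
        congr 1; funext ω; rw [mul_comm, real_inner_comm]
  have step2 : (∑ a ∈ I, ∑ b ∈ I, ∑ c ∈ I, ∑ d ∈ I,
        ∫ ω, ⟪z a ω, z b ω⟫ * ⟪z c ω, z d ω⟫ ∂P) ≤
      ∑ a ∈ I, ∑ b ∈ I, ∑ c ∈ I, ∑ d ∈ I,
        (if (a=b∧c=d)∨(a=c∧b=d)∨(a=d∧b=c) then M else 0) :=
    Finset.sum_le_sum fun a _ => Finset.sum_le_sum fun b _ => Finset.sum_le_sum fun c _ =>
      Finset.sum_le_sum fun d _ => hterm a b c d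
  have hcard : (I.card : ℝ) = τ := by simp [hI, Nat.card_Icc]
  have split : (∑ a ∈ I, ∑ b ∈ I, ∑ c ∈ I, ∑ d ∈ I,
        (if (a=b∧c=d)∨(a=c∧b=d)∨(a=d∧b=c) then M else 0)) ≤
      3 * (τ:ℝ)^2 * M := by
    have hsplit : (∑ a ∈ I, ∑ b ∈ I, ∑ c ∈ I, ∑ d ∈ I,
          (if (a=b∧c=d)∨(a=c∧b=d)∨(a=d∧b=c) then M else 0)) ≤
        (∑ a ∈ I, ∑ b ∈ I, ∑ c ∈ I, ∑ d ∈ I, (if (a=b∧c=d) then M else 0)) +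
        (∑ a ∈ I, ∑ b ∈ I, ∑ c ∈ I, ∑ d ∈ I, (if (a=c∧b=d) then M else 0)) +
        (∑ a ∈ I, ∑ b ∈ I, ∑ c ∈ I, ∑ d ∈ I, (if (a=d∧b=c) then M else 0)) := by
      rw [← Finset.sum_add_distrib, ← Finset.sum_add_distrib]
      refine Finset.sum_le_sum fun a _ => ?_
      rw [← Finset.sum_add_distrib, ← Finset.sum_add_distrib]
      refine Finset.sum_le_sum fun b _ => ?_
      rw [← Finset.sum_add_distrib, ← Finset.sum_add_distrib]
      refine Finset.sum_le_sum fun c _ => ?_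
      rw [← Finset.sum_add_distrib, ← Finset.sum_add_distrib]
      refine Finset.sum_le_sum fun d _ => ?_
      exact ite_sum_le M hM0 _ _ _
    have e1 : (∑ a ∈ I, ∑ b ∈ I, ∑ c ∈ I, ∑ d ∈ I, (if (a=b∧c=d) then M else 0))
        = (τ:ℝ)^2 * M := by
      have : ∀ a b : ℕ, (∑ c ∈ I, ∑ d ∈ I, (if (a=b∧c=d) then M else 0))
          = if a = b then (τ:ℝ) * M else 0 := by
        intro a b
        by_cases hab : a = b
        · simp only [hab, true_and, if_pos rfl]
          calc ∑ c ∈ I, ∑ d ∈ I, (if c=d then M else 0)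
              = ∑ c ∈ I, (if c ∈ I then M else 0) := by
                refine Finset.sum_congr rfl fun c hc => ?_
                rw [Finset.sum_ite_eq I c fun _ => M]
            _ = (τ:ℝ) * M := by
                rw [Finset.sum_congr rfl fun c hc => if_pos hc]
                rw [Finset.sum_const, nsmul_eq_mul, hcard]
        · simp [hab]
      rw [Finset.sum_congr rfl fun a _ => Finset.sum_congr rfl fun b _ => this a b]
      calc ∑ a ∈ I, ∑ b ∈ I, (if a = b then (τ:ℝ) * M else 0)
          = ∑ a ∈ I, (if a ∈ I then (τ:ℝ)*M else 0) := by
            refine Finset.sum_congr rfl fun a ha => ?_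
            rw [Finset.sum_ite_eq I a fun _ => (τ:ℝ)*M]
        _ = (τ:ℝ)^2 * M := by
            rw [Finset.sum_congr rfl fun a ha => if_pos ha]
            rw [Finset.sum_const, nsmul_eq_mul, hcard]; ring
    have e2 : (∑ a ∈ I, ∑ b ∈ I, ∑ c ∈ I, ∑ d ∈ I, (if (a=c∧b=d) then M else 0))
        = (τ:ℝ)^2 * M := by
      have inner2 : ∀ a b, a ∈ I → b ∈ I →
          (∑ c ∈ I, ∑ d ∈ I, (if (a=c∧b=d) then M else 0)) = M := by
        intro a b ha hb
        have : ∀ c, (∑ d ∈ I, (if (a=c∧b=d) then M else 0))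
            = if a = c then M else 0 := by
          intro c
          by_cases hac : a = c
          · rw [if_pos hac]
            simp only [hac, true_and]
            rw [Finset.sum_ite_eq I b fun _ => M, if_pos hb]
          · simp [hac]
        rw [Finset.sum_congr rfl fun c _ => this c]
        rw [Finset.sum_ite_eq I a fun _ => M, if_pos ha]
      rw [Finset.sum_congr rfl fun a ha => Finset.sum_congr rfl fun b hb => inner2 a b ha hb]
      simp [Finset.sum_const, nsmul_eq_mul, hcard]; ring
    have e3 : (∑ a ∈ I, ∑ b ∈ I, ∑ c ∈ I, ∑ d ∈ I, (if (a=d∧b=c) then M else 0))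
        = (τ:ℝ)^2 * M := by
      have inner3 : ∀ a b, a ∈ I → b ∈ I →
          (∑ c ∈ I, ∑ d ∈ I, (if (a=d∧b=c) then M else 0)) = M := by
        intro a b ha hb
        have : ∀ c, (∑ d ∈ I, (if (a=d∧b=c) then M else 0))
            = if b = c then M else 0 := by
          intro c
          by_cases hbc : b = c
          · rw [if_pos hbc]
            simp only [hbc, and_true]
            rw [Finset.sum_ite_eq I a fun _ => M, if_pos ha]
          · simp [hbc]
        rw [Finset.sum_congr rfl fun c _ => this c]
        rw [Finset.sum_ite_eq I b fun _ => M, if_pos hb]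
      rw [Finset.sum_congr rfl fun a ha => Finset.sum_congr rfl fun b hb => inner3 a b ha hb]
      simp [Finset.sum_const, nsmul_eq_mul, hcard]; ring
    rw [e1, e2, e3] at hsplit
    linarith
  rw [step1]
  exact step2.trans split

lemma bavg_meas (hmeas : ∀ i, Measurable (z i)) (τ : ℕ) : Measurable (bavg2 z τ) := by
  unfold bavg2
  exact (Finset.measurable_sum _ fun s _ => hmeas s).const_smul ((τ : ℝ)⁻¹)

lemma hexp4 (τ : ℕ) (ω : Ω) : ‖∑ s ∈ Finset.Icc 1 τ, z s ω‖ ^ 4 =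
    ∑ a ∈ Finset.Icc 1 τ, ∑ b ∈ Finset.Icc 1 τ, ∑ c ∈ Finset.Icc 1 τ, ∑ d ∈ Finset.Icc 1 τ,
      ⟪z a ω, z b ω⟫ * ⟪z c ω, z d ω⟫ := by
  have h1 : ‖∑ s ∈ Finset.Icc 1 τ, z s ω‖ ^ 2 =
      ∑ a ∈ Finset.Icc 1 τ, ∑ b ∈ Finset.Icc 1 τ, ⟪z a ω, z b ω⟫ := by
    rw [← real_inner_self_eq_norm_sq, sum_inner]
    exact Finset.sum_congr rfl fun a _ => inner_sum _ _ _
  have h2 : ‖∑ s ∈ Finset.Icc 1 τ, z s ω‖ ^ 4 =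
      (‖∑ s ∈ Finset.Icc 1 τ, z s ω‖ ^ 2) * (‖∑ s ∈ Finset.Icc 1 τ, z s ω‖ ^ 2) := by ring
  rw [h2, h1, Finset.sum_mul_sum]
  refine Finset.sum_congr rfl fun a _ => ?_
  calc ∑ c ∈ Finset.Icc 1 τ, (∑ b ∈ Finset.Icc 1 τ, ⟪z a ω, z b ω⟫) *
        (∑ d ∈ Finset.Icc 1 τ, ⟪z c ω, z d ω⟫)
      = ∑ c ∈ Finset.Icc 1 τ, ∑ b ∈ Finset.Icc 1 τ, ∑ d ∈ Finset.Icc 1 τ,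
          ⟪z a ω, z b ω⟫ * ⟪z c ω, z d ω⟫ := by
        exact Finset.sum_congr rfl fun c _ => by rw [Finset.sum_mul_sum]
    _ = ∑ b ∈ Finset.Icc 1 τ, ∑ c ∈ Finset.Icc 1 τ, ∑ d ∈ Finset.Icc 1 τ,
          ⟪z a ω, z b ω⟫ * ⟪z c ω, z d ω⟫ := Finset.sum_comm

lemma hS4int (hmeas : ∀ i, Measurable (z i))
    (hident : ∀ i j, IdentDistrib (z i) (z j) P P)
    (hint : Integrable (fun ω => ‖z 1 ω‖ ^ 4) P) (τ : ℕ) :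
    Integrable (fun ω => ‖∑ s ∈ Finset.Icc 1 τ, z s ω‖ ^ 4) P := by
  refine (Integrable.congr ?_ (Filter.Eventually.of_forall fun ω => (hexp4 z τ ω).symm))
  exact integrable_finset_sum _ fun a _ => integrable_finset_sum _ fun b _ =>
    integrable_finset_sum _ fun c _ => integrable_finset_sum _ fun d _ =>
      hinner_int P z hmeas hident hint a b c d

lemma bavg4_eq (τ : ℕ) (ω : Ω) :
    ‖bavg2 z τ ω‖ ^ 4 = ((τ:ℝ)⁻¹)^4 * ‖∑ s ∈ Finset.Icc 1 τ, z s ω‖ ^ 4 := by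
  unfold bavg2
  rw [norm_smul]
  rw [Real.norm_eq_abs, abs_of_nonneg (by positivity)]
  ring

lemma bavg4_int (hmeas : ∀ i, Measurable (z i))
    (hident : ∀ i j, IdentDistrib (z i) (z j) P P)
    (hint : Integrable (fun ω => ‖z 1 ω‖ ^ 4) P) (τ : ℕ) :
    Integrable (fun ω => ‖bavg2 z τ ω‖ ^ 4) P := by
  refine (Integrable.congr (((hS4int P z hmeas hident hint τ).const_mul (((τ:ℝ)⁻¹)^4)))
    (Filter.Eventually.of_forall fun ω => (bavg4_eq z τ ω).symm))

lemma bavg4_bound (hmeas : ∀ i, Measurable (z i))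
    (hindep : iIndepFun z P)
    (hident : ∀ i j, IdentDistrib (z i) (z j) P P)
    (hmean : ∀ i, ∫ ω, z i ω ∂P = 0)
    (hint : Integrable (fun ω => ‖z 1 ω‖ ^ 4) P) (τ : ℕ) (hτ : 1 ≤ τ) :
    (∫ ω, ‖bavg2 z τ ω‖ ^ 4 ∂P) ≤ 4 * (∫ ω, ‖z 1 ω‖ ^ 4 ∂P) / (τ:ℝ)^2 := by
  have hτ0 : (0:ℝ) < τ := by exact_mod_cast hτ
  have hM0 : (0:ℝ) ≤ ∫ ω, ‖z 1 ω‖ ^ 4 ∂P := integral_nonneg fun ω => by positivity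
  calc (∫ ω, ‖bavg2 z τ ω‖ ^ 4 ∂P)
      = ∫ ω, ((τ:ℝ)⁻¹)^4 * ‖∑ s ∈ Finset.Icc 1 τ, z s ω‖ ^ 4 ∂P :=
        integral_congr_ae (Filter.Eventually.of_forall fun ω => bavg4_eq z τ ω)
    _ = ((τ:ℝ)⁻¹)^4 * ∫ ω, ‖∑ s ∈ Finset.Icc 1 τ, z s ω‖ ^ 4 ∂P := integral_const_mul _ _
    _ ≤ ((τ:ℝ)⁻¹)^4 * (3 * (τ:ℝ)^2 * ∫ ω, ‖z 1 ω‖ ^ 4 ∂P) := by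
        refine mul_le_mul_of_nonneg_left (moment4 P z hmeas hindep hident hmean hint τ)
          (by positivity)
    _ ≤ 4 * (∫ ω, ‖z 1 ω‖ ^ 4 ∂P) / (τ:ℝ)^2 := by
        rw [div_eq_mul_inv]
        have : ((τ:ℝ)⁻¹)^4 * (3 * (τ:ℝ)^2) = 3 * ((τ:ℝ)^2)⁻¹ := by
          field_simp
        calc ((τ:ℝ)⁻¹)^4 * (3 * (τ:ℝ)^2 * ∫ ω, ‖z 1 ω‖ ^ 4 ∂P)
            = 3 * ((τ:ℝ)^2)⁻¹ * ∫ ω, ‖z 1 ω‖ ^ 4 ∂P := by rw [← mul_assoc, this]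
          _ ≤ 4 * ((τ:ℝ)^2)⁻¹ * ∫ ω, ‖z 1 ω‖ ^ 4 ∂P := by
              refine mul_le_mul_of_nonneg_right ?_ hM0
              refine mul_le_mul_of_nonneg_right (by norm_num) (by positivity)
          _ = 4 * (∫ ω, ‖z 1 ω‖ ^ 4 ∂P) * ((τ:ℝ)^2)⁻¹ := by ring

lemma pair_int (hmeas : ∀ i, Measurable (z i))
    (hident : ∀ i j, IdentDistrib (z i) (z j) P P)
    (hint : Integrable (fun ω => ‖z 1 ω‖ ^ 4) P) (τ σ : ℕ) (hτ1 : 1 ≤ τ) (hσ1 : 1 ≤ σ) :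
    Integrable (fun ω => ‖bavg2 z τ ω‖ ^ 2 * ‖bavg2 z σ ω‖ ^ 2) P := by
  have hτ0 : (0:ℝ) < τ := by exact_mod_cast hτ1
  have hσ0 : (0:ℝ) < σ := by exact_mod_cast hσ1
  have hg : Integrable (fun ω =>
      ((τ:ℝ)/(σ:ℝ) * (‖bavg2 z τ ω‖^2)^2 + (‖bavg2 z σ ω‖^2)^2/((τ:ℝ)/(σ:ℝ)))/2) P := by
    have h1 := (bavg4_int P z hmeas hident hint τ).const_mul ((τ:ℝ)/(σ:ℝ))
    have h2 := (bavg4_int P z hmeas hident hint σ).div_const ((τ:ℝ)/(σ:ℝ))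
    have h3 : Integrable (fun ω => (τ:ℝ)/(σ:ℝ) * ‖bavg2 z τ ω‖^4
        + ‖bavg2 z σ ω‖^4/((τ:ℝ)/(σ:ℝ))) P := h1.add h2
    refine h3.div_const 2 |>.congr (Filter.Eventually.of_forall fun ω => ?_)
    ring
  refine hg.mono' ?_ ?_
  · exact (((bavg_meas z hmeas τ).norm.pow_const 2).mul
      ((bavg_meas z hmeas σ).norm.pow_const 2)).aestronglyMeasurable
  · filter_upwards with ω
    rw [Real.norm_eq_abs, abs_of_nonneg (by positivity)]
    exact amgm2w _ _ _ (div_pos hτ0 hσ0)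

lemma gint (hmeas : ∀ i, Measurable (z i))
    (hident : ∀ i j, IdentDistrib (z i) (z j) P P)
    (hint : Integrable (fun ω => ‖z 1 ω‖ ^ 4) P) (t : ℕ) :
    Integrable (fun ω => (∑ τ ∈ Finset.Icc 1 t, ‖bavg2 z τ ω‖ ^ 2) ^ 2) P := by
  have h : Integrable (fun ω => ∑ τ ∈ Finset.Icc 1 t, ∑ σ ∈ Finset.Icc 1 t,
      ‖bavg2 z τ ω‖ ^ 2 * ‖bavg2 z σ ω‖ ^ 2) P :=
    integrable_finset_sum (Finset.Icc 1 t) fun τ hτ =>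
      integrable_finset_sum (Finset.Icc 1 t) fun σ hσ =>
        pair_int P z hmeas hident hint τ σ (Finset.mem_Icc.1 hτ).1 (Finset.mem_Icc.1 hσ).1
  exact h.congr (Filter.Eventually.of_forall fun ω => by
    change _ = (∑ τ ∈ Finset.Icc 1 t, ‖bavg2 z τ ω‖ ^ 2) ^ 2
    rw [sq, Finset.sum_mul_sum])

lemma L2sum (hmeas : ∀ i, Measurable (z i))
    (hindep : iIndepFun z P)
    (hident : ∀ i j, IdentDistrib (z i) (z j) P P)
    (hmean : ∀ i, ∫ ω, z i ω ∂P = 0)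
    (hint : Integrable (fun ω => ‖z 1 ω‖ ^ 4) P) (t : ℕ) (ht : 1 ≤ t) :
    (∫ ω, (∑ τ ∈ Finset.Icc 1 t, ‖bavg2 z τ ω‖ ^ 2) ^ 2 ∂P) ≤
      4 * (∫ ω, ‖z 1 ω‖ ^ 4 ∂P) * (1 + Real.log t) ^ 2 := by
  set M := ∫ ω, ‖z 1 ω‖ ^ 4 ∂P with hM
  have hM0 : 0 ≤ M := integral_nonneg fun ω => by positivity
  set I := Finset.Icc 1 t with hI
  have hmem : ∀ τ ∈ I, (0:ℝ) < τ := by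
    intro τ hτ; rw [hI, Finset.mem_Icc] at hτ; exact_mod_cast hτ.1
  -- pointwise expansion
  have hexp : ∀ ω, (∑ τ ∈ I, ‖bavg2 z τ ω‖ ^ 2) ^ 2 =
      ∑ τ ∈ I, ∑ σ ∈ I, ‖bavg2 z τ ω‖ ^ 2 * ‖bavg2 z σ ω‖ ^ 2 := by
    intro ω; rw [sq, Finset.sum_mul_sum]
  -- integrability of each pair
  have hpair_int : ∀ τ σ, τ ∈ I → σ ∈ I →
      Integrable (fun ω => ‖bavg2 z τ ω‖ ^ 2 * ‖bavg2 z σ ω‖ ^ 2) P := fun τ σ hτ hσ =>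
    pair_int P z hmeas hident hint τ σ (Finset.mem_Icc.1 hτ).1 (Finset.mem_Icc.1 hσ).1
  -- per-pair integral bound
  have hpair : ∀ τ σ, τ ∈ I → σ ∈ I →
      (∫ ω, ‖bavg2 z τ ω‖ ^ 2 * ‖bavg2 z σ ω‖ ^ 2 ∂P) ≤ 4 * M * ((τ:ℝ)⁻¹ * (σ:ℝ)⁻¹) := by
    intro τ σ hτ hσ
    have hτ0 := hmem τ hτ; have hσ0 := hmem σ hσ
    have hτ1 : 1 ≤ τ := by rw [hI, Finset.mem_Icc] at hτ; exact hτ.1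
    have hσ1 : 1 ≤ σ := by rw [hI, Finset.mem_Icc] at hσ; exact hσ.1
    have hl : (0:ℝ) < (τ:ℝ)/(σ:ℝ) := div_pos hτ0 hσ0
    have h1 := (bavg4_int P z hmeas hident hint τ).const_mul ((τ:ℝ)/(σ:ℝ))
    have h2 := (bavg4_int P z hmeas hident hint σ).div_const ((τ:ℝ)/(σ:ℝ))
    have h3 : Integrable (fun ω => ((τ:ℝ)/(σ:ℝ) * ‖bavg2 z τ ω‖^4
        + ‖bavg2 z σ ω‖^4/((τ:ℝ)/(σ:ℝ)))/2) P := (h1.add h2).div_const 2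
    have step : (∫ ω, ‖bavg2 z τ ω‖ ^ 2 * ‖bavg2 z σ ω‖ ^ 2 ∂P) ≤
        ∫ ω, ((τ:ℝ)/(σ:ℝ) * ‖bavg2 z τ ω‖^4 + ‖bavg2 z σ ω‖^4/((τ:ℝ)/(σ:ℝ)))/2 ∂P := by
      refine integral_mono (hpair_int τ σ hτ hσ) h3 fun ω => ?_
      have := amgm2w (‖bavg2 z τ ω‖^2) (‖bavg2 z σ ω‖^2) ((τ:ℝ)/(σ:ℝ)) hl
      calc ‖bavg2 z τ ω‖ ^ 2 * ‖bavg2 z σ ω‖ ^ 2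
          ≤ ((τ:ℝ)/(σ:ℝ) * (‖bavg2 z τ ω‖^2)^2 + (‖bavg2 z σ ω‖^2)^2/((τ:ℝ)/(σ:ℝ)))/2 := this
        _ = ((τ:ℝ)/(σ:ℝ) * ‖bavg2 z τ ω‖^4 + ‖bavg2 z σ ω‖^4/((τ:ℝ)/(σ:ℝ)))/2 := by ring
    refine step.trans ?_
    have e1 : (∫ ω, ((τ:ℝ)/(σ:ℝ) * ‖bavg2 z τ ω‖^4
        + ‖bavg2 z σ ω‖^4/((τ:ℝ)/(σ:ℝ)))/2 ∂P) =
        ((τ:ℝ)/(σ:ℝ) * ∫ ω, ‖bavg2 z τ ω‖^4 ∂P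
          + (∫ ω, ‖bavg2 z σ ω‖^4 ∂P)/((τ:ℝ)/(σ:ℝ)))/2 := by
      rw [integral_div, integral_add h1 ?h2i]
      · rw [integral_const_mul, integral_div]
      · exact h2
    rw [e1]
    have bτ := bavg4_bound P z hmeas hindep hident hmean hint τ hτ1
    have bσ := bavg4_bound P z hmeas hindep hident hmean hint σ hσ1
    calc ((τ:ℝ)/(σ:ℝ) * ∫ ω, ‖bavg2 z τ ω‖^4 ∂P
          + (∫ ω, ‖bavg2 z σ ω‖^4 ∂P)/((τ:ℝ)/(σ:ℝ)))/2
        ≤ ((τ:ℝ)/(σ:ℝ) * (4 * M / (τ:ℝ)^2) + (4 * M / (σ:ℝ)^2)/((τ:ℝ)/(σ:ℝ)))/2 := by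
          gcongr
      _ = 4 * M * ((τ:ℝ)⁻¹ * (σ:ℝ)⁻¹) := by
          field_simp
          ring
  -- sum up
  have hlog0 : (0:ℝ) ≤ 1 + Real.log t := by
    have : (1:ℝ) ≤ (t:ℝ) := by exact_mod_cast ht
    have := Real.log_nonneg this
    linarith
  have hharm : (∑ τ ∈ I, (τ:ℝ)⁻¹) ≤ 1 + Real.log t := harm_sum t
  have hharm0 : (0:ℝ) ≤ ∑ τ ∈ I, (τ:ℝ)⁻¹ :=
    Finset.sum_nonneg fun τ _ => by positivity
  calc (∫ ω, (∑ τ ∈ I, ‖bavg2 z τ ω‖ ^ 2) ^ 2 ∂P)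
      = ∫ ω, ∑ τ ∈ I, ∑ σ ∈ I, ‖bavg2 z τ ω‖ ^ 2 * ‖bavg2 z σ ω‖ ^ 2 ∂P :=
        integral_congr_ae (Filter.Eventually.of_forall fun ω => hexp ω)
    _ = ∑ τ ∈ I, ∑ σ ∈ I, ∫ ω, ‖bavg2 z τ ω‖ ^ 2 * ‖bavg2 z σ ω‖ ^ 2 ∂P := by
        rw [integral_finset_sum _ fun τ hτ =>
          integrable_finset_sum _ fun σ hσ => hpair_int τ σ hτ hσ]
        exact Finset.sum_congr rfl fun τ hτ =>
          integral_finset_sum _ fun σ hσ => hpair_int τ σ hτ hσ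
    _ ≤ ∑ τ ∈ I, ∑ σ ∈ I, 4 * M * ((τ:ℝ)⁻¹ * (σ:ℝ)⁻¹) :=
        Finset.sum_le_sum fun τ hτ => Finset.sum_le_sum fun σ hσ => hpair τ σ hτ hσ
    _ = 4 * M * ((∑ τ ∈ I, (τ:ℝ)⁻¹) * (∑ σ ∈ I, (σ:ℝ)⁻¹)) := by
        rw [Finset.sum_mul_sum]
        simp only [Finset.mul_sum]
    _ ≤ 4 * M * ((1 + Real.log t) * (1 + Real.log t)) := by
        refine mul_le_mul_of_nonneg_left ?_ (by positivity)
        exact mul_le_mul hharm hharm hharm0 hlog0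
    _ = 4 * M * (1 + Real.log t) ^ 2 := by ring

end AuxProb

theorem stmt10 {Ω : Type*} [MeasurableSpace Ω] (P : Measure Ω) [IsProbabilityMeasure P]
    (n : ℕ) (z : ℕ → Ω → EuclideanSpace ℝ (Fin n)) (hmeas : ∀ i, Measurable (z i))
    (hindep : iIndepFun z P)
    (hident : ∀ i j, IdentDistrib (z i) (z j) P P)
    (hmean : ∀ i, ∫ ω, z i ω ∂P = 0)
    (hint : Integrable (fun ω => ‖z 1 ω‖ ^ 4) P)
    (A : ℕ → ℕ → Matrix (Fin n) (Fin n) ℝ)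
    (hAsymm : ∀ t₁ t₂, (A t₁ t₂).IsSymm)
    (hAnonneg : ∀ t₁ t₂ i j, 0 ≤ A t₁ t₂ i j)
    (hArow : ∀ t₁ t₂ i, ∑ j, A t₁ t₂ i j = 1)
    (t : ℕ) (ht : 1 ≤ t) :
    (∫ ω, ∑ τ₁ ∈ Finset.Icc 1 t, ∑ τ₂ ∈ Finset.Icc 1 t,
        ∑ τ₃ ∈ Finset.Icc 1 t, ∑ τ₄ ∈ Finset.Icc 1 t,
          ⟪bavg2 z τ₁ ω, Matrix.toEuclideanLin (A τ₁ τ₂) (bavg2 z τ₂ ω)⟫ *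
            ⟪bavg2 z τ₃ ω, Matrix.toEuclideanLin (A τ₃ τ₄) (bavg2 z τ₄ ω)⟫ ∂P) ≤
      4 * (∫ ω, ‖z 1 ω‖ ^ 4 ∂P) * (t : ℝ) ^ 2 * (1 + Real.log t) ^ 2 := by
  set M := ∫ ω, ‖z 1 ω‖ ^ 4 ∂P with hM
  have hM0 : 0 ≤ M := integral_nonneg fun ω => by positivity
  set F : Ω → ℝ := fun ω => ∑ τ₁ ∈ Finset.Icc 1 t, ∑ τ₂ ∈ Finset.Icc 1 t,
      ∑ τ₃ ∈ Finset.Icc 1 t, ∑ τ₄ ∈ Finset.Icc 1 t,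
        ⟪bavg2 z τ₁ ω, Matrix.toEuclideanLin (A τ₁ τ₂) (bavg2 z τ₂ ω)⟫ *
          ⟪bavg2 z τ₃ ω, Matrix.toEuclideanLin (A τ₃ τ₄) (bavg2 z τ₄ ω)⟫ with hF
  set G : Ω → ℝ := fun ω => (∑ τ ∈ Finset.Icc 1 t, ‖bavg2 z τ ω‖ ^ 2) ^ 2 with hG
  have hGint : Integrable G P := gint P z hmeas hident hint t
  have hptw : ∀ ω, |F ω| ≤ (t:ℝ)^2 * G ω := fun ω =>
    ptwise t (fun τ => bavg2 z τ ω) A hAsymm hAnonneg hArow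
  have hT : ∀ τ₁ τ₂ : ℕ,
      Measurable (fun ω => (Matrix.toEuclideanLin (A τ₁ τ₂)) (bavg2 z τ₂ ω)) := fun τ₁ τ₂ =>
    ((Matrix.toEuclideanLin (A τ₁ τ₂)).continuous_of_finiteDimensional).measurable.comp
      (bavg_meas z hmeas τ₂)
  have hFmeas : Measurable F := by
    refine Finset.measurable_sum _ fun τ₁ _ => Finset.measurable_sum _ fun τ₂ _ =>
      Finset.measurable_sum _ fun τ₃ _ => Finset.measurable_sum _ fun τ₄ _ => ?_
    exact ((bavg_meas z hmeas τ₁).inner (hT τ₁ τ₂)).mul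
      ((bavg_meas z hmeas τ₃).inner (hT τ₃ τ₄))
  have hFint : Integrable F P := by
    refine (hGint.const_mul ((t:ℝ)^2)).mono' hFmeas.aestronglyMeasurable ?_
    filter_upwards with ω
    rw [Real.norm_eq_abs]
    exact hptw ω
  calc (∫ ω, F ω ∂P) ≤ ∫ ω, (t:ℝ)^2 * G ω ∂P := by
        refine integral_mono hFint (hGint.const_mul _) fun ω => ?_
        exact (le_abs_self _).trans (hptw ω)
    _ = (t:ℝ)^2 * ∫ ω, G ω ∂P := integral_const_mul _ _
    _ ≤ (t:ℝ)^2 * (4 * M * (1 + Real.log t) ^ 2) := by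
        refine mul_le_mul_of_nonneg_left ?_ (by positivity)
        exact L2sum P z hmeas hindep hident hmean hint t ht
    _ = 4 * M * (t:ℝ)^2 * (1 + Real.log t) ^ 2 := by ring
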